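/- Let M be a t-spike of order r. Then the rank of M equals r and the corank of M (the rank of the dual matroid M*) equals r; in particular |E(M)| = 2r. -/

import Mathlib

open Set

/-- A circuit of a matroid: a minimal dependent set. -/
def IsCircuit {α : Type*} (M : Matroid α) (C : Set α) : Prop :=
  M.Dep C ∧ ∀ D, D ⊂ C → ¬ M.Dep D

/-- A cocircuit of a matroid: a circuit of the dual. -/
def IsCocircuit {α : Type*} (M : Matroid α) (C : Set α) : Prop :=
  IsCircuit M✶ C

/-- `A` is an associated partition witnessing that `M` is a `t`-spike of order `r`:
a partition of the ground set into `r` two-element arms (with `r ≥ t`) such that the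
union of any `t` arms is both a circuit and a cocircuit. -/
def IsSpike {α : Type*} (M : Matroid α) (t r : ℕ) (A : Fin r → Set α) : Prop :=
  t ≤ r ∧ (∀ i, (A i).ncard = 2) ∧ (∀ i j, i ≠ j → Disjoint (A i) (A j)) ∧
    (⋃ i, A i) = M.E ∧
    ∀ I : Finset (Fin r), I.card = t →
      IsCircuit M (⋃ i ∈ I, A i) ∧ IsCocircuit M (⋃ i ∈ I, A i)

/-- The rank of a set in a matroid: the maximum cardinality of an independent subset. -/
noncomputable def rk {α : Type*} (M : Matroid α) (X : Set α) : ℕ :=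
  sSup {n | ∃ I, I ⊆ X ∧ M.Indep I ∧ I.ncard = n}

/-- The connectivity function `λ(X) = r(X) + r(E \ X) − r(M)`. -/
noncomputable def lambda {α : Type*} (M : Matroid α) (X : Set α) : ℤ :=
  (rk M X : ℤ) + (rk M (M.E \ X) : ℤ) - (rk M M.E : ℤ)

/-!
If `S` is a set of at least `t - 1` arms and `{a, b}` is a further arm, a `t`-arm circuit through
`{a, b}` and arms of `S` puts `a` in the closure of `b` and the arms of `S`; so adding an arm raises
the rank by at most one, and `r(⋃ S) ≤ |S| + t - 1` for every set `S` of arms. Deleting a point `a`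
from a `t`-arm cocircuit `C*` leaves a coindependent set, so the other `r - t` arms together with
`a` span `M`, giving `r(M) ≤ r`. The same holds for `M✶`, and `r(M) + r(M✶) = |E| = 2r`.
-/

section Spike

variable {α : Type*} {M : Matroid α} {t r : ℕ} {A : Fin r → Set α}

lemma isCircuit_iff_matroid_isCircuit {C : Set α} : IsCircuit M C ↔ M.IsCircuit C := by
  rw [Matroid.isCircuit_iff_forall_ssubset, IsCircuit]
  refine and_congr_right fun hC => forall₂_congr fun D hDC => ?_
  rw [Matroid.not_dep_iff (hDC.subset.trans hC.subset_ground)]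

lemma cast_rk_eq_eRk {X : Set α} (hX : M.IsRkFinite X) : (rk M X : ℕ∞) = M.eRk X := by
  obtain ⟨I, hI, hIfin⟩ := hX.exists_finite_isBasis'
  have hmax : IsGreatest {n | ∃ J, J ⊆ X ∧ M.Indep J ∧ J.ncard = n} I.ncard := by
    refine ⟨⟨I, hI.subset, hI.indep, rfl⟩, ?_⟩
    rintro _ ⟨J, hJX, hJ, rfl⟩
    rw [← Nat.cast_le (α := ℕ∞), (hX.finite_of_indep_subset hJ hJX).cast_ncard_eq,
      hIfin.cast_ncard_eq, hI.encard_eq_eRk]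
    exact hJ.encard_le_eRk_of_subset hJX
  rw [rk, hmax.csSup_eq, hIfin.cast_ncard_eq, hI.encard_eq_eRk]

lemma IsSpike.dual (hA : IsSpike M t r A) : IsSpike M✶ t r A := by
  obtain ⟨htr, hcard, hdisj, hUnion, hCC⟩ := hA
  refine ⟨htr, hcard, hdisj, hUnion, fun S hS => ⟨(hCC S hS).2, ?_⟩⟩
  rw [IsCocircuit, Matroid.dual_dual]
  exact (hCC S hS).1

lemma IsSpike.isCircuit (hA : IsSpike M t r A) {S : Finset (Fin r)} (hS : S.card = t) :
    M.IsCircuit (⋃ i ∈ S, A i) :=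
  isCircuit_iff_matroid_isCircuit.mp (hA.2.2.2.2 S hS).1

lemma IsSpike.exists_arm_eq_pair (hA : IsSpike M t r A) (i : Fin r) :
    ∃ a b, a ≠ b ∧ A i = {a, b} :=
  Set.ncard_eq_two.mp (hA.2.1 i)

lemma IsSpike.encard_biUnion (hA : IsSpike M t r A) (S : Finset (Fin r)) :
    (⋃ i ∈ S, A i).encard = 2 * S.card := by
  have hdisj : (S : Set (Fin r)).PairwiseDisjoint A := fun i _ j _ hij => hA.2.2.1 i j hij
  have harm (i : Fin r) : (A i).encard = 2 := by
    obtain ⟨a, b, hab, h⟩ := hA.exists_arm_eq_pair i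
    rw [h, Set.encard_pair hab]
  have := S.finite_toSet.encard_biUnion hdisj
  rw [finsum_mem_coe_finset, Finset.sum_congr rfl fun i _ => harm i] at this
  simpa [mul_comm] using this

lemma IsSpike.eRk_biUnion_insert_le (hA : IsSpike M t r A) (ht : 0 < t) {S : Finset (Fin r)}
    {i : Fin r} (hi : i ∉ S) (hS : t - 1 ≤ S.card) :
    M.eRk (⋃ j ∈ insert i S, A j) ≤ M.eRk (⋃ j ∈ S, A j) + 1 := by
  obtain ⟨a, b, -, hab⟩ := hA.exists_arm_eq_pair i
  obtain ⟨T, hTS, hT⟩ := Finset.exists_subset_card_eq hS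
  have hiT : i ∉ T := fun h => hi (hTS h)
  have hC := hA.isCircuit (S := insert i T) (by rw [Finset.card_insert_of_notMem hiT]; omega)
  have haC : a ∈ ⋃ j ∈ insert i T, A j :=
    Set.mem_biUnion (Finset.mem_insert_self i T) (hab ▸ Set.mem_insert a {b})
  have hCa : (⋃ j ∈ insert i T, A j) \ {a} ⊆ insert b (⋃ j ∈ S, A j) := by
    rintro x ⟨hx, hxa⟩
    rw [Finset.set_biUnion_insert, hab] at hx
    obtain (rfl | rfl) | hx := hx
    · exact absurd rfl hxa
    · exact Set.mem_insert x _
    · exact Set.mem_insert_of_mem b (Set.biUnion_subset_biUnion_left (by exact_mod_cast hTS) hx)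
  have hacl : a ∈ M.closure (insert b (⋃ j ∈ S, A j)) :=
    M.closure_subset_closure hCa (hC.mem_closure_sdiff_singleton_of_mem haC)
  have hunion : (⋃ j ∈ insert i S, A j) = insert a (insert b (⋃ j ∈ S, A j)) := by
    rw [Finset.set_biUnion_insert, hab, Set.insert_union, Set.singleton_union]
  calc M.eRk (⋃ j ∈ insert i S, A j)
      = M.eRk (insert b (⋃ j ∈ S, A j)) := by
        rw [hunion, ← M.eRk_insert_closure_eq, Set.insert_eq_of_mem hacl, M.eRk_closure_eq]
    _ ≤ M.eRk (⋃ j ∈ S, A j) + 1 := M.eRk_insert_le_add_one b _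

lemma IsSpike.eRk_biUnion_add_one_le (hA : IsSpike M t r A) (ht : 0 < t)
    (S : Finset (Fin r)) : M.eRk (⋃ i ∈ S, A i) + 1 ≤ S.card + t := by
  induction S using Finset.induction with
  | empty => simpa using Nat.one_le_of_lt ht
  | @insert i S hi ih =>
    rw [Finset.card_insert_of_notMem hi]
    by_cases hS : t - 1 ≤ S.card
    · calc M.eRk (⋃ j ∈ insert i S, A j) + 1 ≤ M.eRk (⋃ j ∈ S, A j) + 1 + 1 := by
            gcongr; exact hA.eRk_biUnion_insert_le ht hi hS
        _ ≤ S.card + t + 1 := by gcongr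
        _ = ↑(S.card + 1) + t := by push_cast; ring
    · calc M.eRk (⋃ j ∈ insert i S, A j) + 1 ≤ 2 * ↑(S.card + 1) + 1 := by
            gcongr
            rw [← Finset.card_insert_of_notMem hi, ← hA.encard_biUnion]
            exact M.eRk_le_encard _
        _ ≤ ↑(S.card + 1) + t := by norm_cast; omega

lemma IsSpike.eRank_le (hA : IsSpike M t r A) (ht : 0 < t) : M.eRank ≤ r := by
  obtain ⟨S, -, hS⟩ := Finset.exists_subset_card_eq (s := (Finset.univ : Finset (Fin r)))
    (n := t) (by simpa using hA.1)
  obtain ⟨i, hi⟩ := Finset.card_pos.mp (hS ▸ ht)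
  obtain ⟨a, b, -, hab⟩ := hA.exists_arm_eq_pair i
  set C := ⋃ j ∈ S, A j
  have haC : a ∈ C := Set.mem_biUnion hi (hab ▸ Set.mem_insert a {b})
  have hcoind : M.Coindep (C \ {a}) :=
    (hA.dual.isCircuit (S := S) hS).ssubset_indep (Set.sdiff_singleton_ssubset.mpr haC)
  have hspan_sub : M.E \ (C \ {a}) ⊆ insert a (⋃ j ∈ Sᶜ, A j) := by
    rintro x ⟨hxE, hxC⟩
    rw [← hA.2.2.2.1] at hxE
    obtain ⟨j, hxj⟩ := Set.mem_iUnion.mp hxE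
    by_cases hjS : j ∈ S
    · exact Or.inl (by_contra fun hxa => hxC ⟨Set.mem_biUnion hjS hxj, hxa⟩)
    · exact Or.inr (Set.mem_biUnion (Finset.mem_compl.mpr hjS) hxj)
  have hcompl := hA.eRk_biUnion_add_one_le ht Sᶜ
  rw [Finset.card_compl, Fintype.card_fin, hS] at hcompl
  calc M.eRank = M.eRk (M.E \ (C \ {a})) := hcoind.compl_spanning.eRk_eq.symm
    _ ≤ M.eRk (⋃ j ∈ Sᶜ, A j) + 1 :=
        (M.eRk_mono hspan_sub).trans (M.eRk_insert_le_add_one a _)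
    _ ≤ ↑(r - t) + t := hcompl
    _ = r := by norm_cast; have := hA.1; omega

end Spike

theorem statement15 {α : Type*} (M : Matroid α) (t r : ℕ) (ht : 0 < t)
    (A : Fin r → Set α) (hA : IsSpike M t r A) :
    rk M M.E = r ∧ rk M✶ M✶.E = r ∧ M.E.ncard = 2 * r := by
  have hE : M.E.encard = 2 * r := by
    simpa [hA.2.2.2.1] using hA.encard_biUnion Finset.univ
  have hEfin : M.E.Finite :=
    Set.encard_ne_top_iff.mp (by rw [hE]; exact_mod_cast ENat.natCast_ne_top (2 * r))
  have hrk : (rk M M.E : ℕ∞) = M.eRank := by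
    rw [cast_rk_eq_eRk (M.isRkFinite_of_finite hEfin), M.eRk_ground]
  have hrk' : (rk M✶ M✶.E : ℕ∞) = M✶.eRank := by
    rw [cast_rk_eq_eRk (M✶.isRkFinite_of_finite (X := M✶.E) hEfin), M✶.eRk_ground]
  have hle : (rk M M.E : ℕ∞) ≤ r := hrk ▸ hA.eRank_le ht
  have hle' : (rk M✶ M✶.E : ℕ∞) ≤ r := hrk' ▸ hA.dual.eRank_le ht
  have hsum : (rk M M.E : ℕ∞) + rk M✶ M✶.E = ↑(2 * r) := by
    rw [hrk, hrk', M.eRank_add_eRank_dual, hE]; norm_cast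
  have hncard : M.E.ncard = 2 * r := by exact_mod_cast hEfin.cast_ncard_eq.trans hE
  norm_cast at hle hle' hsum
  omega
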